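/- Let d ≥ 1 be an integer, 0 < α ≤ 2, 0 < β < 1 with α/β < d < α(1+β)/β (intermediate dimensions), and let p : ℝ^d → [0,∞) be measurable with ∫_{ℝ^d} p(x)^{1+β} dx < ∞. For t > 0 set p_t(x) := t^{-d/α} p(t^{-1/α} x). Then ∫_0^∞ ∫_{ℝ^d} (∫_0^1 p_{l+s}(x) ds)^{1+β} dx dl < ∞. (This is the (1+β)-integrability of the kernel defining the stable process η².) -/

import Mathlib

open MeasureTheory Set Filter
open scoped ENNReal

/-- The rescaled family `p_t(x) := t^{-d/α} p(t^{-1/α} x)` of a self-similar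
transition density profile `p`. -/
noncomputable def pSelfSim (d : ℕ) (α : ℝ) (p : EuclideanSpace ℝ (Fin d) → ℝ)
    (t : ℝ) (x : EuclideanSpace ℝ (Fin d)) : ℝ :=
  t ^ (-((d : ℝ) / α)) * p ((t ^ (-(1 / α)) : ℝ) • x)

/-!
Jensen's inequality on the probability space `(0, 1]` moves the power `1 + β` inside the
`ds`-integral, and Tonelli then reduces the claim to the scaling identity
`‖p_t‖_{1+β}^{1+β} = t^{-q} ‖p‖_{1+β}^{1+β}` with `q = dβ/α`. What remains is
`∫_0^∞ ∫_0^1 (l + s)^{-q} ds dl = ∫_0^1 s^{1-q} / (q - 1) ds`, which is finite exactly when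
`1 < q < 2`; this is where the intermediate-dimension condition enters.
-/

theorem ENNReal.rpow_lintegral_le_lintegral_rpow {Ω : Type*} [MeasurableSpace Ω]
    (μ : Measure Ω) [IsProbabilityMeasure μ] {r : ℝ} (hr : 1 ≤ r) {f : Ω → ℝ≥0∞}
    (hf : AEMeasurable f μ) :
    (∫⁻ a, f a ∂μ) ^ r ≤ ∫⁻ a, f a ^ r ∂μ := by
  obtain rfl | hr := hr.eq_or_lt
  · simp
  have holder := ENNReal.lintegral_mul_le_Lp_mul_Lq μ (Real.HolderConjugate.conjExponent hr)
    hf (aemeasurable_const (b := (1 : ℝ≥0∞)))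
  simp only [Pi.mul_apply, mul_one, ENNReal.one_rpow, lintegral_const, measure_univ] at holder
  calc (∫⁻ a, f a ∂μ) ^ r ≤ ((∫⁻ a, f a ^ r ∂μ) ^ (1 / r)) ^ r :=
        ENNReal.rpow_le_rpow holder (by linarith)
    _ = ∫⁻ a, f a ^ r ∂μ := by
        rw [← ENNReal.rpow_mul, one_div, inv_mul_cancel₀ (by linarith), ENNReal.rpow_one]

theorem MeasureTheory.Measure.lintegral_comp_smul {E : Type*} [NormedAddCommGroup E]
    [NormedSpace ℝ E] [MeasurableSpace E] [BorelSpace E] [FiniteDimensional ℝ E]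
    (μ : Measure E) [μ.IsAddHaarMeasure] (f : E → ℝ≥0∞) {c : ℝ} (hc : c ≠ 0) :
    ∫⁻ x, f (c • x) ∂μ = ENNReal.ofReal |(c ^ Module.finrank ℝ E)⁻¹| * ∫⁻ x, f x ∂μ := by
  rw [← smul_eq_mul, ← lintegral_smul_measure, ← Measure.map_addHaar_smul μ hc]
  exact (lintegral_map_equiv f (Homeomorph.smulOfNeZero c hc).toMeasurableEquiv).symm

theorem measurable_uncurry_pSelfSim {d : ℕ} (α : ℝ) {p : EuclideanSpace ℝ (Fin d) → ℝ}
    (hpm : Measurable p) : Measurable (Function.uncurry (pSelfSim d α p)) :=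
  (measurable_fst.pow_const _).mul
    (hpm.comp ((measurable_fst.pow_const _).smul measurable_snd))

theorem lintegral_ofReal_pSelfSim_rpow (d : ℕ) (α : ℝ) {r : ℝ} (hr : 0 ≤ r)
    {p : EuclideanSpace ℝ (Fin d) → ℝ} (hp0 : ∀ x, 0 ≤ p x) {t : ℝ} (ht : 0 < t) :
    ∫⁻ x, ENNReal.ofReal (pSelfSim d α p t x) ^ r
      = ENNReal.ofReal (t ^ (-((d : ℝ) / α * (r - 1)))) * ∫⁻ x, ENNReal.ofReal (p x ^ r) := by
  have hpos : ∀ a : ℝ, 0 < t ^ a := fun a => Real.rpow_pos_of_pos ht a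
  have hpow : ∀ x, ENNReal.ofReal (pSelfSim d α p t x) ^ r
      = ENNReal.ofReal ((t ^ (-((d : ℝ) / α))) ^ r)
          * ENNReal.ofReal (p (t ^ (-(1 / α)) • x) ^ r) := fun x => by
    rw [pSelfSim, ENNReal.ofReal_mul (hpos _).le, ENNReal.mul_rpow_of_nonneg _ _ hr,
      ENNReal.ofReal_rpow_of_nonneg (hpos _).le hr, ENNReal.ofReal_rpow_of_nonneg (hp0 _) hr]
  have hjac : ((t ^ (-(1 / α))) ^ Module.finrank ℝ (EuclideanSpace ℝ (Fin d)))⁻¹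
      = t ^ ((d : ℝ) / α) := by
    rw [finrank_euclideanSpace_fin, ← Real.rpow_natCast, ← Real.rpow_mul ht.le,
      ← Real.rpow_neg ht.le]
    ring_nf
  simp_rw [hpow]
  rw [lintegral_const_mul' _ _ ENNReal.ofReal_ne_top,
    Measure.lintegral_comp_smul volume (fun y => ENNReal.ofReal (p y ^ r)) (hpos _).ne', hjac,
    abs_of_pos (hpos _), ← mul_assoc, ← Real.rpow_mul ht.le, ← ENNReal.ofReal_mul (hpos _).le,
    ← Real.rpow_add ht]
  ring_nf

theorem lintegral_Ioi_rpow_add {q s : ℝ} (hq : 1 < q) (hs : 0 < s) :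
    ∫⁻ l in Ioi (0 : ℝ), ENNReal.ofReal ((l + s) ^ (-q))
      = ENNReal.ofReal (s ^ (1 - q) / (q - 1)) := by
  have hshift : ∫⁻ l in Ioi (0 : ℝ), ENNReal.ofReal ((l + s) ^ (-q))
      = ∫⁻ u in Ioi s, ENNReal.ofReal (u ^ (-q)) := by
    conv_rhs => rw [← (measurePreserving_add_right volume s).map_eq]
    rw [setLIntegral_map measurableSet_Ioi (by fun_prop) (measurable_add_const s)]
    congr 1
    ext l
    simp
  have hnonneg : 0 ≤ᵐ[volume.restrict (Ioi s)] fun u : ℝ => u ^ (-q) :=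
    ae_restrict_of_forall_mem measurableSet_Ioi fun u hu =>
      Real.rpow_nonneg (hs.trans hu).le _
  rw [hshift, ← ofReal_integral_eq_lintegral_ofReal
      (integrableOn_Ioi_rpow_of_lt (by linarith) hs) hnonneg,
    integral_Ioi_rpow_of_lt (by linarith) hs]
  congr 1
  rw [show -q + 1 = 1 - q by ring, ← neg_div_neg_eq, neg_neg, neg_sub]

theorem lintegral_Ioi_lintegral_Ioc_rpow_add_lt_top {q : ℝ} (hq1 : 1 < q) (hq2 : q < 2) :
    ∫⁻ l in Ioi (0 : ℝ), ∫⁻ s in Ioc (0 : ℝ) 1, ENNReal.ofReal ((l + s) ^ (-q)) < ⊤ := by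
  have hmeas : Measurable fun z : ℝ × ℝ => ENNReal.ofReal ((z.1 + z.2) ^ (-q)) :=
    ((measurable_fst.add measurable_snd).pow_const _).ennreal_ofReal
  rw [lintegral_lintegral_swap hmeas.aemeasurable,
    setLIntegral_congr_fun measurableSet_Ioc fun s hs => lintegral_Ioi_rpow_add hq1 hs.1]
  have hint : IntegrableOn (fun s : ℝ => s ^ (1 - q) / (q - 1)) (Ioc 0 1) :=
    ((intervalIntegral.integrableOn_Ioo_rpow_iff one_pos).2 (by linarith)
      |>.congr_set_ae Ioo_ae_eq_Ioc.symm).div_const _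
  exact (hasFiniteIntegral_iff_ofReal (ae_restrict_of_forall_mem measurableSet_Ioc fun s hs =>
    div_nonneg (Real.rpow_nonneg hs.1.le _) (by linarith))).1 hint.2

theorem lintegral_rpow_lintegral_pSelfSim_le (d : ℕ) (α : ℝ) {r : ℝ} (hr : 1 ≤ r)
    {p : EuclideanSpace ℝ (Fin d) → ℝ} (hpm : Measurable p) (hp0 : ∀ x, 0 ≤ p x)
    {l : ℝ} (hl : 0 ≤ l) :
    ∫⁻ x, (∫⁻ s in Ioc (0 : ℝ) 1, ENNReal.ofReal (pSelfSim d α p (l + s) x)) ^ r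
      ≤ (∫⁻ s in Ioc (0 : ℝ) 1, ENNReal.ofReal ((l + s) ^ (-((d : ℝ) / α * (r - 1)))))
          * ∫⁻ x, ENNReal.ofReal (p x ^ r) := by
  have : IsProbabilityMeasure (volume.restrict (Ioc (0 : ℝ) 1)) := ⟨by simp⟩
  have hP := measurable_uncurry_pSelfSim α hpm
  calc ∫⁻ x, (∫⁻ s in Ioc (0 : ℝ) 1, ENNReal.ofReal (pSelfSim d α p (l + s) x)) ^ r
      ≤ ∫⁻ x, ∫⁻ s in Ioc (0 : ℝ) 1, ENNReal.ofReal (pSelfSim d α p (l + s) x) ^ r :=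
        lintegral_mono fun x => ENNReal.rpow_lintegral_le_lintegral_rpow _ hr
          (hP.comp ((measurable_const_add l).prodMk measurable_const)).ennreal_ofReal.aemeasurable
    _ = ∫⁻ s in Ioc (0 : ℝ) 1, ∫⁻ x, ENNReal.ofReal (pSelfSim d α p (l + s) x) ^ r :=
        lintegral_lintegral_swap ((hP.comp (((measurable_const_add l).comp measurable_snd).prodMk
          measurable_fst)).ennreal_ofReal.pow_const _).aemeasurable
    _ = ∫⁻ s in Ioc (0 : ℝ) 1, ENNReal.ofReal ((l + s) ^ (-((d : ℝ) / α * (r - 1))))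
          * ∫⁻ x, ENNReal.ofReal (p x ^ r) :=
        setLIntegral_congr_fun measurableSet_Ioc fun s hs =>
          lintegral_ofReal_pSelfSim_rpow d α (by linarith) hp0 (by linarith [hs.1])
    _ = _ := lintegral_mul_const _
          (((measurable_const_add l).pow_const _).ennreal_ofReal)

theorem stmt_11_general (d : ℕ) (α β : ℝ) (hα0 : 0 < α)
    (hβ0 : 0 < β) (hβ1 : β < 1)
    (hdim1 : α / β < (d : ℝ)) (hdim2 : (d : ℝ) < α * (1 + β) / β)
    (p : EuclideanSpace ℝ (Fin d) → ℝ) (hpm : Measurable p) (hp0 : ∀ x, 0 ≤ p x)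
    (hpint : ∫⁻ x, ENNReal.ofReal (p x ^ (1 + β)) < ⊤) :
    ∫⁻ l in Ioi (0 : ℝ),
      ∫⁻ x, (∫⁻ s in Ioc (0 : ℝ) 1, ENNReal.ofReal (pSelfSim d α p (l + s) x)) ^ (1 + β) < ⊤ := by
  set q : ℝ := (d : ℝ) / α * (1 + β - 1)
  have hq : q = (d : ℝ) * β / α := by ring
  have hq1 : 1 < q := by
    rw [hq, one_lt_div hα0]
    linarith [(div_lt_iff₀ hβ0).1 hdim1]
  have hq2 : q < 2 := by
    rw [hq, div_lt_iff₀ hα0]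
    nlinarith [(lt_div_iff₀ hβ0).1 hdim2]
  calc _ ≤ ∫⁻ l in Ioi (0 : ℝ), (∫⁻ s in Ioc (0 : ℝ) 1, ENNReal.ofReal ((l + s) ^ (-q)))
          * ∫⁻ x, ENNReal.ofReal (p x ^ (1 + β)) :=
        setLIntegral_mono_ae' measurableSet_Ioi (ae_of_all _ fun l hl =>
          lintegral_rpow_lintegral_pSelfSim_le d α (by linarith) hpm hp0 (le_of_lt hl))
    _ = (∫⁻ l in Ioi (0 : ℝ), ∫⁻ s in Ioc (0 : ℝ) 1, ENNReal.ofReal ((l + s) ^ (-q)))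
          * ∫⁻ x, ENNReal.ofReal (p x ^ (1 + β)) := lintegral_mul_const' _ _ hpint.ne
    _ < ⊤ := ENNReal.mul_lt_top (lintegral_Ioi_lintegral_Ioc_rpow_add_lt_top hq1 hq2) hpint

theorem stmt_11 (d : ℕ) (hd : 1 ≤ d) (α β : ℝ) (hα0 : 0 < α) (hα2 : α ≤ 2)
    (hβ0 : 0 < β) (hβ1 : β < 1)
    (hdim1 : α / β < (d : ℝ)) (hdim2 : (d : ℝ) < α * (1 + β) / β)
    (p : EuclideanSpace ℝ (Fin d) → ℝ) (hpm : Measurable p) (hp0 : ∀ x, 0 ≤ p x)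
    (hpint : ∫⁻ x, ENNReal.ofReal (p x ^ (1 + β)) < ⊤) :
    ∫⁻ l in Ioi (0 : ℝ),
      ∫⁻ x, (∫⁻ s in Ioc (0 : ℝ) 1, ENNReal.ofReal (pSelfSim d α p (l + s) x)) ^ (1 + β) < ⊤ :=
  stmt_11_general d α β hα0 hβ0 hβ1 hdim1 hdim2 p hpm hp0 hpint
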